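/- For each k with 1 ≤ k ≤ n−1 and each path monomial m from i to j, the image φ_{σ_k}(m) lies in the ℤ-linear span of path monomials from s_k(i) to s_k(j), where s_k = (k, k+1) is the adjacent transposition. (In particular, φ_{σ_k}(a_{ij}) is a ℤ-linear combination of path monomials from s_k(i) to s_k(j).) -/
import Mathlib


/-!
STATEMENT 7: For each `k` with `1 ≤ k ≤ n−1` and each path monomial `m` from `i` to `j`,
the image `φ_{σ_k}(m)` lies in the `ℤ`-linear span of path monomials from `s_k(i)` to
`s_k(j)`, where `s_k = (k, k+1)` is the adjacent transposition.

Setup as in the paper (0-indexed): `R₀ = ℂ[μ^{±1}, λ^{±1}, U^{±1}]` (modeled as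
`AddMonoidAlgebra ℂ (Fin 3 →₀ ℤ)`), `F` is the polynomial ring over `R₀` in the
variables `a_{ij}`, `i ≠ j ∈ Fin n`.  A path monomial from `i` to `j` is a product
`a_{c₀c₁}·a_{c₁c₂}·⋯·a_{c_{t−1}c_t}` with `c₀ = i`, `c_t = j` and consecutive indices
distinct (the empty product `1` being the unique path monomial from `i` to `i` of
length `0`).
-/

noncomputable section

/-- The Laurent polynomial ring `R₀ = ℂ[μ^{±1}, λ^{±1}, U^{±1}]`. -/
abbrev R0 : Type := AddMonoidAlgebra ℂ (Fin 3 →₀ ℤ)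

/-- The index set of the variables `a_{ij}`, `i ≠ j`. -/
abbrev Vars (n : ℕ) := {p : Fin n × Fin n // p.1 ≠ p.2}

/-- The polynomial ring `F` over `R₀` in the variables `a_{ij}`. -/
abbrev Fpoly (n : ℕ) := MvPolynomial (Vars n) R0

/-- The generator `a_{ij}` (junk value `0` if `i = j`; all uses below have `i ≠ j`). -/
def av (n : ℕ) (i j : Fin n) : Fpoly n :=
  if h : i ≠ j then MvPolynomial.X ⟨(i, j), h⟩ else 0

/-- The image of the generator `a_{ij}` under `φ_{σ_k}`, where `K, K1` stand for the
strands `k, k+1`. -/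
def phiGen (n : ℕ) (K K1 : Fin n) (i j : Fin n) : Fpoly n :=
  if i = K ∧ j = K1 then -(av n K1 K)
  else if i = K1 ∧ j = K then -(av n K K1)
  else if i = K then av n K1 j - av n K1 K * av n K j
  else if i = K1 then av n K j
  else if j = K then av n i K1 - av n i K * av n K K1
  else if j = K1 then av n i K
  else av n i j

/-- The `R₀`-algebra endomorphism `φ_{σ_k}` of `F`. -/
def phi (n : ℕ) (K K1 : Fin n) : Fpoly n →ₐ[R0] Fpoly n :=
  MvPolynomial.aeval fun v => phiGen n K K1 v.1.1 v.1.2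

/-- The product `a_{i c₀}·a_{c₀ c₁}·⋯` along a chain of indices. -/
def pathProd (n : ℕ) : Fin n → List (Fin n) → Fpoly n
  | _, [] => 1
  | i, c :: rest => av n i c * pathProd n c rest

/-- Consecutive entries of the chain (starting at `i`) are distinct. -/
def chainOK (n : ℕ) : Fin n → List (Fin n) → Prop
  | _, [] => True
  | i, c :: rest => i ≠ c ∧ chainOK n c rest

/-- The set of path monomials from `i` to `j` in `F`. -/
def pathMonomials (n : ℕ) (i j : Fin n) : Set (Fpoly n) :=
  {x | ∃ l : List (Fin n), chainOK n i l ∧ l.getLastD i = j ∧ x = pathProd n i l}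

section Aux

variable (n : ℕ)

lemma getLastD_cons' (a i : Fin n) (l : List (Fin n)) :
    (a :: l).getLastD i = l.getLastD a := by
  cases l <;> simp [List.getLastD, List.getLast?_cons_cons]

lemma pathProd_append (i : Fin n) (l l' : List (Fin n)) :
    pathProd n i (l ++ l') = pathProd n i l * pathProd n (l.getLastD i) l' := by
  induction l generalizing i with
  | nil => simp [pathProd]
  | cons a l ih =>
    rw [List.cons_append, pathProd, pathProd, ih a, getLastD_cons', mul_assoc]

lemma chainOK_append (i : Fin n) (l l' : List (Fin n)) (h : chainOK n i l)
    (h' : chainOK n (l.getLastD i) l') : chainOK n i (l ++ l') := by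
  induction l generalizing i with
  | nil => simpa using h'
  | cons a l ih =>
    obtain ⟨h1, h2⟩ := h
    exact ⟨h1, ih a h2 (by rw [getLastD_cons'] at h'; exact h')⟩

lemma getLastD_append' (i : Fin n) (l l' : List (Fin n)) :
    (l ++ l').getLastD i = l'.getLastD (l.getLastD i) := by
  induction l generalizing i with
  | nil => simp
  | cons a l ih => rw [List.cons_append, getLastD_cons', getLastD_cons', ih a]

lemma pathMonomials_mul {i j l : Fin n} {x y : Fpoly n}
    (hx : x ∈ pathMonomials n i j) (hy : y ∈ pathMonomials n j l) :
    x * y ∈ pathMonomials n i l := by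
  obtain ⟨L, hc, hl, rfl⟩ := hx
  obtain ⟨L', hc', hl', rfl⟩ := hy
  refine ⟨L ++ L', ?_, ?_, ?_⟩
  · exact chainOK_append n i L L' hc (hl ▸ hc')
  · rw [getLastD_append', hl, hl']
  · rw [pathProd_append, hl]

lemma span_pathMonomials_mul {i j l : Fin n} {x y : Fpoly n}
    (hx : x ∈ Submodule.span ℤ (pathMonomials n i j))
    (hy : y ∈ Submodule.span ℤ (pathMonomials n j l)) :
    x * y ∈ Submodule.span ℤ (pathMonomials n i l) := by
  have h := Submodule.mul_mem_mul hx hy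
  rw [Submodule.span_mul_span] at h
  refine Submodule.span_mono ?_ h
  rintro _ ⟨a, ha, b, hb, rfl⟩
  exact pathMonomials_mul n ha hb

lemma av_mem {i j : Fin n} (h : i ≠ j) : av n i j ∈ pathMonomials n i j :=
  ⟨[j], ⟨h, trivial⟩, rfl, by simp [pathProd]⟩

lemma av_av_mem {i a j : Fin n} (h1 : i ≠ a) (h2 : a ≠ j) :
    av n i a * av n a j ∈ pathMonomials n i j :=
  ⟨[a, j], ⟨h1, h2, trivial⟩, rfl, by simp [pathProd]⟩

lemma phi_av_mem {K K1 : Fin n} (hK : K ≠ K1) {i j : Fin n} (hij : i ≠ j) :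
    phi n K K1 (av n i j) ∈
      Submodule.span ℤ (pathMonomials n (Equiv.swap K K1 i) (Equiv.swap K K1 j)) := by
  have hphi : phi n K K1 (av n i j) = phiGen n K K1 i j := by
    rw [av, dif_pos hij, phi, MvPolynomial.aeval_X]
  rw [hphi, phiGen]
  split_ifs with h1 h2 h3 h4 h5 h6
  · obtain ⟨rfl, rfl⟩ := h1
    rw [Equiv.swap_apply_left, Equiv.swap_apply_right]
    exact neg_mem (Submodule.subset_span (av_mem n hK.symm))
  · obtain ⟨rfl, rfl⟩ := h2
    rw [Equiv.swap_apply_right, Equiv.swap_apply_left]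
    exact neg_mem (Submodule.subset_span (av_mem n hK))
  · subst h3
    have hjK1 : j ≠ K1 := fun h => h1 ⟨rfl, h⟩
    rw [Equiv.swap_apply_left, Equiv.swap_apply_of_ne_of_ne (Ne.symm hij) hjK1]
    exact sub_mem (Submodule.subset_span (av_mem n (Ne.symm hjK1)))
      (Submodule.subset_span (av_av_mem n hK.symm hij))
  · subst h4
    have hjK : j ≠ K := fun h => h2 ⟨rfl, h⟩
    rw [Equiv.swap_apply_right, Equiv.swap_apply_of_ne_of_ne hjK (Ne.symm hij)]
    exact Submodule.subset_span (av_mem n (Ne.symm hjK))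
  · subst h5
    rw [Equiv.swap_apply_left, Equiv.swap_apply_of_ne_of_ne hij h4]
    exact sub_mem (Submodule.subset_span (av_mem n h4))
      (Submodule.subset_span (av_av_mem n hij hK))
  · subst h6
    rw [Equiv.swap_apply_right, Equiv.swap_apply_of_ne_of_ne h3 hij]
    exact Submodule.subset_span (av_mem n h3)
  · rw [Equiv.swap_apply_of_ne_of_ne h3 h4, Equiv.swap_apply_of_ne_of_ne h5 h6]
    exact Submodule.subset_span (av_mem n hij)

lemma phi_path_mem {K K1 : Fin n} (hK : K ≠ K1) (i j : Fin n) {m : Fpoly n}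
    (hm : m ∈ pathMonomials n i j) :
    phi n K K1 m ∈
      Submodule.span ℤ (pathMonomials n (Equiv.swap K K1 i) (Equiv.swap K K1 j)) := by
  obtain ⟨l, hc, hl, rfl⟩ := hm
  subst hl
  induction l generalizing i with
  | nil =>
    simp only [pathProd, map_one, List.getLastD_nil]
    exact Submodule.subset_span ⟨[], trivial, rfl, rfl⟩
  | cons a l ih =>
    obtain ⟨h1, h2⟩ := hc
    rw [pathProd, map_mul, getLastD_cons']
    exact span_pathMonomials_mul n (phi_av_mem n hK h1) (ih a h2)

end Aux

/-- `φ_{σ_k}` sends each path monomial from `i` to `j` into the `ℤ`-linear span of the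
path monomials from `s_k(i)` to `s_k(j)`. -/
theorem phi_pathMonomial (n : ℕ) (hn : 2 ≤ n) (k : ℕ) (hk : k + 1 < n) (i j : Fin n)
    (m : Fpoly n) (hm : m ∈ pathMonomials n i j) :
    phi n ⟨k, by omega⟩ ⟨k + 1, hk⟩ m ∈
      Submodule.span ℤ (pathMonomials n
        (Equiv.swap (⟨k, by omega⟩ : Fin n) ⟨k + 1, hk⟩ i)
        (Equiv.swap (⟨k, by omega⟩ : Fin n) ⟨k + 1, hk⟩ j)) := by
  exact phi_path_mem n (K := ⟨k, by omega⟩) (K1 := ⟨k + 1, hk⟩)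
    (by simp [Fin.ext_iff]) i j hm

end
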